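/- arXiv:1703.07281 — 3 statements merged into one kernel-verified Lean document; each statement's English description precedes it below -/
import Mathlib

section
/- For any real number a > 0, sup_{u∈ℝ} |Φ(a u) − Φ(u)| ≤ (2πe)^{-1/2} · |a² − 1| / min(a, 1). -/
open ProbabilityTheory

section aux
open MeasureTheory Real

/-- Standard normal cumulative distribution function. -/
noncomputable def stdGaussianCDF (t : ℝ) : ℝ :=
  ((gaussianReal 0 1) (Set.Iic t)).toReal

lemma pdf0 (x : ℝ) : gaussianPDFReal 0 1 x = (Real.sqrt (2*Real.pi))⁻¹ * Real.exp (-(x^2)/2) := by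
  simp [gaussianPDFReal]

lemma cdf_diff {s t : ℝ} (h : s ≤ t) :
    stdGaussianCDF t - stdGaussianCDF s = ((gaussianReal 0 1) (Set.Ioc s t)).toReal := by
  have h1 : Set.Iic t = Set.Iic s ∪ Set.Ioc s t := (Set.Iic_union_Ioc_eq_Iic h).symm
  have h2 : (gaussianReal 0 1) (Set.Iic t)
      = (gaussianReal 0 1) (Set.Iic s) + (gaussianReal 0 1) (Set.Ioc s t) := by
    rw [h1, measure_union _ measurableSet_Ioc]
    exact Set.Iic_disjoint_Ioc le_rfl
  unfold stdGaussianCDF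
  rw [h2, ENNReal.toReal_add (measure_ne_top _ _) (measure_ne_top _ _)]
  ring

lemma meas_Ioc_le {s t C : ℝ} (h : s ≤ t) (hC : 0 ≤ C)
    (hb : ∀ x ∈ Set.Ioc s t, gaussianPDFReal 0 1 x ≤ C) :
    ((gaussianReal 0 1) (Set.Ioc s t)).toReal ≤ C * (t - s) := by
  rw [gaussianReal_apply 0 one_ne_zero]
  have h1 : ∫⁻ x in Set.Ioc s t, gaussianPDF 0 1 x ≤ ∫⁻ _x in Set.Ioc s t, ENNReal.ofReal C := by
    refine setLIntegral_mono measurable_const ?_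
    intro x hx
    exact ENNReal.ofReal_le_ofReal (hb x hx)
  have h2 : ∫⁻ _x in Set.Ioc s t, ENNReal.ofReal C = ENNReal.ofReal C * ENNReal.ofReal (t - s) := by
    rw [setLIntegral_const, Real.volume_Ioc]
  calc (∫⁻ x in Set.Ioc s t, gaussianPDF 0 1 x).toReal
      ≤ (ENNReal.ofReal C * ENNReal.ofReal (t - s)).toReal := by
        refine ENNReal.toReal_mono ?_ (h2 ▸ h1)
        exact ENNReal.mul_ne_top ENNReal.ofReal_ne_top ENNReal.ofReal_ne_top
    _ = C * (t - s) := by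
        rw [← ENNReal.ofReal_mul hC, ENNReal.toReal_ofReal (by nlinarith)]

lemma core_ineq {c : ℝ} : c * Real.exp (-(c^2)/2) ≤ Real.exp (-(1:ℝ)/2) := by
  have h1 : c ≤ Real.exp ((c^2 - 1)/2) := by
    have := Real.add_one_le_exp ((c^2 - 1)/2)
    nlinarith [sq_nonneg (c - 1)]
  calc c * Real.exp (-(c^2)/2) ≤ Real.exp ((c^2-1)/2) * Real.exp (-(c^2)/2) :=
        mul_le_mul_of_nonneg_right h1 (Real.exp_nonneg _)
    _ = Real.exp (-(1:ℝ)/2) := by rw [← Real.exp_add]; ring_nf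

lemma rhs_eq : (2 * Real.pi * Real.exp 1) ^ (-(1:ℝ) / 2) =
    (Real.sqrt (2*Real.pi))⁻¹ * Real.exp (-(1:ℝ)/2) := by
  have h2π : (0:ℝ) ≤ 2 * Real.pi := by positivity
  rw [Real.mul_rpow h2π (Real.exp_nonneg 1), Real.exp_one_rpow]
  congr 1
  rw [neg_div, Real.rpow_neg h2π, Real.sqrt_eq_rpow]

lemma cdf_mono : Monotone stdGaussianCDF := by
  intro x y h
  have := cdf_diff h
  have h0 : 0 ≤ ((gaussianReal 0 1) (Set.Ioc x y)).toReal := ENNReal.toReal_nonneg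
  linarith

end aux

/-- Comparison of normal cdfs with different scales:
`sup_u |Φ(a u) − Φ(u)| ≤ (2πe)^{-1/2} |a² − 1| / min(a,1)`. -/
theorem gaussian_cdf_scale_compare (a : ℝ) (ha : 0 < a) :
    ⨆ u : ℝ, |stdGaussianCDF (a * u) - stdGaussianCDF u| ≤
      (2 * Real.pi * Real.exp 1) ^ (-(1 : ℝ) / 2) * |a ^ 2 - 1| / min a 1 := by
  set m : ℝ := min a 1 with hm_def
  have hm : 0 < m := lt_min ha one_pos
  have hma : m ≤ a := min_le_left a 1
  have hm1 : m ≤ 1 := min_le_right a 1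
  refine ciSup_le fun u => ?_
  set s : ℝ := min (a * u) u with hs_def
  set t : ℝ := max (a * u) u with ht_def
  have hst : s ≤ t := min_le_max
  set C : ℝ := (Real.sqrt (2*Real.pi))⁻¹ * Real.exp (-((m*|u|)^2)/2) with hC_def
  have hC : 0 ≤ C := by positivity
  -- pointwise bound on the density on the interval
  have hb : ∀ x ∈ Set.Ioc s t, gaussianPDFReal 0 1 x ≤ C := by
    intro x hx
    have hx2 : (m*|u|)^2 ≤ x^2 := by
      rcases le_total 0 u with hu | hu
      · have hs' : m * u ≤ s := le_min (by nlinarith) (by nlinarith)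
        have hx' : m * u ≤ x := (lt_of_le_of_lt hs' hx.1).le
        rw [abs_of_nonneg hu]
        exact pow_le_pow_left₀ (mul_nonneg hm.le hu) hx' 2
      · have ht' : t ≤ m * u := max_le (by nlinarith) (by nlinarith)
        have hxle : x ≤ m * u := le_trans hx.2 ht'
        have h1 : (-(m*u))^2 ≤ (-x)^2 :=
          pow_le_pow_left₀ (by nlinarith [mul_nonpos_of_nonneg_of_nonpos hm.le hu])
            (by linarith) 2
        calc (m*|u|)^2 = (-(m*u))^2 := by rw [abs_of_nonpos hu]; ring
          _ ≤ (-x)^2 := h1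
          _ = x^2 := by ring
    rw [pdf0, hC_def]
    have : Real.exp (-(x^2)/2) ≤ Real.exp (-((m*|u|)^2)/2) := by
      apply Real.exp_le_exp.mpr; linarith
    have hpos : (0:ℝ) ≤ (Real.sqrt (2*Real.pi))⁻¹ := by positivity
    exact mul_le_mul_of_nonneg_left this hpos
  -- the absolute difference equals Φ(t) − Φ(s)
  have habs : |stdGaussianCDF (a * u) - stdGaussianCDF u|
      = stdGaussianCDF t - stdGaussianCDF s := by
    rcases le_total (a * u) u with h | h
    · rw [abs_of_nonpos (by linarith [cdf_mono h]), ht_def, hs_def,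
        max_eq_right h, min_eq_left h]
      ring
    · rw [abs_of_nonneg (by linarith [cdf_mono h]), ht_def, hs_def,
        max_eq_left h, min_eq_right h]
  have hlen : t - s = |a - 1| * |u| := by
    rw [ht_def, hs_def, max_sub_min_eq_abs, abs_sub_comm, ← abs_mul]
    congr 1; ring
  have step1 : |stdGaussianCDF (a * u) - stdGaussianCDF u| ≤ C * (|a - 1| * |u|) := by
    rw [habs, cdf_diff hst, ← hlen]
    exact meas_Ioc_le hst hC hb
  have key : m * |u| * Real.exp (-((m*|u|)^2)/2) ≤ Real.exp (-(1:ℝ)/2) := core_ineq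
  have haa : |a - 1| ≤ |a ^ 2 - 1| := by
    have h1 : a ^ 2 - 1 = (a - 1) * (a + 1) := by ring
    rw [h1, abs_mul, abs_of_nonneg (by linarith : (0:ℝ) ≤ a + 1)]
    nlinarith [abs_nonneg (a - 1)]
  calc |stdGaussianCDF (a * u) - stdGaussianCDF u| ≤ C * (|a - 1| * |u|) := step1
    _ = ((Real.sqrt (2*Real.pi))⁻¹ * |a - 1| / m) * (m * |u| * Real.exp (-((m*|u|)^2)/2)) := by
        rw [hC_def]; field_simp
    _ ≤ ((Real.sqrt (2*Real.pi))⁻¹ * |a - 1| / m) * Real.exp (-(1:ℝ)/2) :=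
        mul_le_mul_of_nonneg_left key (by positivity)
    _ ≤ ((Real.sqrt (2*Real.pi))⁻¹ * |a ^ 2 - 1| / m) * Real.exp (-(1:ℝ)/2) := by
        gcongr
    _ = (2 * Real.pi * Real.exp 1) ^ (-(1 : ℝ) / 2) * |a ^ 2 - 1| / m := by
        rw [rhs_eq]; ring
end

section
/- Let r ∈ (1, 5/2) and define a_{k₁,k₂} := k₁^{−r} if k₁ = k₂ ≥ 1 and a_{k₁,k₂} := 0 otherwise. If r > s + 1 for some s ≥ 1, then ∑_{i=0}^∞ (i+1)^s (∑_{‖(j₁,j₂)‖_∞ = i} a_{j₁,j₂}²)^{1/2} < ∞, while ∑_{k₁,k₂∈Z} (|k₁|+1)² (|k₂|+1)² a_{k₁,k₂}² = ∞ when r < 5/2. -/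
/-!
The `ℓ^∞` sphere of radius `i` meets the support of `a` only in `(i, i)`, so the `i`-th block
term is `(i + 1)^s i^{-r} ≍ i^{s - r}`, summable since `s - r < -1`. Along the diagonal the
polynomial weight gives `(n + 1)^4 n^{-2r} ≥ n^{4 - 2r}`, not summable since `4 - 2r > -1`.
-/

open Finset

noncomputable def diagonalCoeff (r : ℝ) (k : ℤ × ℤ) : ℝ :=
  if 1 ≤ k.1 ∧ k.1 = k.2 then (k.1 : ℝ) ^ (-r) else 0

namespace diagonalCoeff

variable (r : ℝ)

lemma nonneg (k : ℤ × ℤ) : 0 ≤ diagonalCoeff r k := by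
  unfold diagonalCoeff
  split_ifs with h
  · exact Real.rpow_nonneg (by exact_mod_cast (zero_le_one.trans h.1)) _
  · rfl

lemma mem_diagonal_of_ne_zero {k : ℤ × ℤ} (hk : diagonalCoeff r k ≠ 0) :
    0 ≤ k.1 ∧ k.1 = k.2 := by
  unfold diagonalCoeff at hk
  split_ifs at hk with h
  · exact ⟨zero_le_one.trans h.1, h.2⟩
  · exact absurd rfl hk

lemma natCast_le (n : ℕ) : diagonalCoeff r (n, n) ≤ (n : ℝ) ^ (-r) := by
  unfold diagonalCoeff
  split_ifs
  · simp
  · exact Real.rpow_nonneg n.cast_nonneg _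

lemma natCast_add_one (n : ℕ) : diagonalCoeff r (n + 1, n + 1) = ((n : ℝ) + 1) ^ (-r) := by
  simp [diagonalCoeff]

end diagonalCoeff

lemma sum_linftySphere_eq_of_mem_diagonal {M : Type*} [AddCommMonoid M] (g : ℤ × ℤ → M)
    (hg : ∀ k, g k ≠ 0 → 0 ≤ k.1 ∧ k.1 = k.2) (i : ℕ) :
    ∑ j ∈ ((Icc (-(i : ℤ)) i) ×ˢ (Icc (-(i : ℤ)) i)).filter
      (fun j => max |j.1| |j.2| = (i : ℤ)), g j = g (i, i) := by
  refine sum_eq_single_of_mem _ (by simp) fun j hj hji => ?_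
  by_contra hgj
  obtain ⟨hj₁, hj⟩ := hg j hgj
  obtain ⟨j₁, j₂⟩ := j
  simp only at hj₁ hj
  subst hj
  simp only [mem_filter, max_self, abs_of_nonneg hj₁] at hj
  exact hji (by rw [hj.2])

lemma summable_nat_add_one_rpow_iff {p : ℝ} :
    Summable (fun n : ℕ => ((n : ℝ) + 1) ^ p) ↔ p < -1 := by
  simpa using
    (summable_nat_add_iff 1 (f := fun n : ℕ => (n : ℝ) ^ p)).trans Real.summable_nat_rpow

lemma natCast_rpow_neg_le {r : ℝ} (hr : 0 ≤ r) (n : ℕ) :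
    (n : ℝ) ^ (-r) ≤ 2 ^ r * ((n : ℝ) + 1) ^ (-r) := by
  rcases n.eq_zero_or_pos with rfl | hn
  · simpa using (Real.zero_rpow_le_one _).trans (Real.one_le_rpow one_le_two hr)
  · have hn : (1 : ℝ) ≤ n := by exact_mod_cast hn
    calc (n : ℝ) ^ (-r) ≤ (((n : ℝ) + 1) / 2) ^ (-r) :=
          Real.rpow_le_rpow_of_nonpos (by positivity) (by linarith) (by linarith)
      _ = 2 ^ r * ((n : ℝ) + 1) ^ (-r) := by
          rw [Real.div_rpow (by positivity) zero_le_two, Real.rpow_neg zero_le_two,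
            div_inv_eq_mul, mul_comm]

lemma summable_add_one_rpow_mul_rpow_neg {r s : ℝ} (hr : 0 ≤ r) (hrs : s + 1 < r) :
    Summable (fun n : ℕ => ((n : ℝ) + 1) ^ s * (n : ℝ) ^ (-r)) := by
  refine Summable.of_nonneg_of_le (fun n => by positivity) (fun n => ?_)
    ((summable_nat_add_one_rpow_iff.mpr (by linarith : s + -r < -1)).mul_left (2 ^ r))
  calc ((n : ℝ) + 1) ^ s * (n : ℝ) ^ (-r)
        ≤ ((n : ℝ) + 1) ^ s * (2 ^ r * ((n : ℝ) + 1) ^ (-r)) :=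
        mul_le_mul_of_nonneg_left (natCast_rpow_neg_le hr n) (by positivity)
    _ = 2 ^ r * ((n : ℝ) + 1) ^ (s + -r) := by
        rw [Real.rpow_add (by positivity)]
        ring

lemma summable_weighted_linftySphere_norm_diagonalCoeff {r s : ℝ} (hr : 0 ≤ r)
    (hrs : s + 1 < r) :
    Summable (fun i : ℕ =>
      ((i : ℝ) + 1) ^ s *
        (∑ j ∈ ((Icc (-(i : ℤ)) i) ×ˢ (Icc (-(i : ℤ)) i)).filter
            (fun j => max |j.1| |j.2| = (i : ℤ)), diagonalCoeff r j ^ 2) ^ ((1 : ℝ) / 2)) := by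
  have hsphere (i : ℕ) := sum_linftySphere_eq_of_mem_diagonal (fun j => diagonalCoeff r j ^ 2)
    (fun k hk => diagonalCoeff.mem_diagonal_of_ne_zero r (ne_zero_pow two_ne_zero hk)) i
  simp only [hsphere, ← Real.sqrt_eq_rpow, Real.sqrt_sq (diagonalCoeff.nonneg r _)]
  refine Summable.of_nonneg_of_le (fun i => ?_) (fun i => ?_)
    (summable_add_one_rpow_mul_rpow_neg hr hrs)
  · exact mul_nonneg (by positivity) (diagonalCoeff.nonneg r _)
  · exact mul_le_mul_of_nonneg_left (diagonalCoeff.natCast_le r i) (by positivity)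

lemma rpow_four_sub_two_mul_le {x r : ℝ} (hx : 0 < x) :
    x ^ (4 - 2 * r) ≤ (x + 1) ^ 2 * (x + 1) ^ 2 * (x ^ (-r)) ^ 2 := by
  have hsplit : x ^ (4 - 2 * r) = x ^ 2 * x ^ 2 * (x ^ (-r)) ^ 2 := by
    rw [← Real.rpow_mul_natCast hx.le, ← Real.rpow_natCast x 2, ← Real.rpow_add hx,
      ← Real.rpow_add hx]
    ring_nf
  rw [hsplit]
  gcongr <;> linarith

lemma not_summable_polynomial_weight_diagonalCoeff {r : ℝ} (hr : r < 5 / 2) :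
    ¬ Summable (fun k : ℤ × ℤ =>
        ((|k.1| : ℝ) + 1) ^ 2 * ((|k.2| : ℝ) + 1) ^ 2 * (diagonalCoeff r k) ^ 2) := by
  intro h
  have hdiag := h.comp_injective (i := fun n : ℕ => ((n : ℤ) + 1, (n : ℤ) + 1))
    fun m n hmn => by simpa using hmn
  have : Summable (fun n : ℕ => ((n : ℝ) + 1) ^ (4 - 2 * r)) := by
    refine Summable.of_nonneg_of_le (fun n => by positivity) (fun n => ?_) hdiag
    have hx : (0 : ℝ) < n + 1 := by positivity
    simpa [diagonalCoeff.natCast_add_one, abs_of_pos hx] using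
      rpow_four_sub_two_mul_le (r := r) hx
  linarith [summable_nat_add_one_rpow_iff.mp this]

theorem linear_field_counterexample_general (r s : ℝ) (hr1 : 1 < r) (hr2 : r < 5 / 2)
    (hrs : s + 1 < r)
    (a : ℤ × ℤ → ℝ)
    (ha : ∀ k : ℤ × ℤ, a k = if 1 ≤ k.1 ∧ k.1 = k.2 then (k.1 : ℝ) ^ (-r) else 0) :
    Summable (fun i : ℕ =>
      ((i : ℝ) + 1) ^ s *
        (∑ j ∈ ((Finset.Icc (-(i : ℤ)) i) ×ˢ (Finset.Icc (-(i : ℤ)) i)).filter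
            (fun j => max |j.1| |j.2| = (i : ℤ)), (a j) ^ 2) ^ ((1 : ℝ) / 2))
    ∧ ¬ Summable (fun k : ℤ × ℤ =>
        ((|k.1| : ℝ) + 1) ^ 2 * ((|k.2| : ℝ) + 1) ^ 2 * (a k) ^ 2) := by
  obtain rfl : a = diagonalCoeff r := funext ha
  exact ⟨summable_weighted_linftySphere_norm_diagonalCoeff (by linarith) hrs,
    not_summable_polynomial_weight_diagonalCoeff hr2⟩

/-- The diagonal coefficients `a_{k,k} = k^{-r}` (k ≥ 1): the weighted block
summability condition holds when `r > s + 1`, while the polynomial-weight ℓ²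
condition of Mielkaitis–Paulauskas fails when `r < 5/2`. -/
theorem linear_field_counterexample (r s : ℝ) (hr1 : 1 < r) (hr2 : r < 5 / 2)
    (hs : 1 ≤ s) (hrs : s + 1 < r)
    (a : ℤ × ℤ → ℝ)
    (ha : ∀ k : ℤ × ℤ, a k = if 1 ≤ k.1 ∧ k.1 = k.2 then (k.1 : ℝ) ^ (-r) else 0) :
    Summable (fun i : ℕ =>
      ((i : ℝ) + 1) ^ s *
        (∑ j ∈ ((Finset.Icc (-(i : ℤ)) i) ×ˢ (Finset.Icc (-(i : ℤ)) i)).filter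
            (fun j => max |j.1| |j.2| = (i : ℤ)), (a j) ^ 2) ^ ((1 : ℝ) / 2))
    ∧ ¬ Summable (fun k : ℤ × ℤ =>
        ((|k.1| : ℝ) + 1) ^ 2 * ((|k.2| : ℝ) + 1) ^ 2 * (a k) ^ 2) :=
  linear_field_counterexample_general r s hr1 hr2 hrs a ha
end

section
/- Suppose ∑_{j∈Z^d} |E[X_0 X_j]| < ∞, the weights satisfy ‖b_n‖_{ℓ²} → ∞ and ‖τ_{e_q}(b_n) − b_n‖_{ℓ²}/‖b_n‖_{ℓ²} → 0 for all q, and the b_{n,i} have finite support. Then with S_n = ∑_{i∈Z^d} b_{n,i} X_i and σ² = ∑_{i∈Z^d} Cov(X_0, X_i), one has E[S_n²]/‖b_n‖_{ℓ²}² = σ² + ε_n, where the error term ε_n satisfies |ε_n| ≤ ∑_{j∈Z^d} |E[X_0 X_j]| · |∑_i b_{n,i} b_{n,i+j}/‖b_n‖_{ℓ²}² − 1|, and ε_n → 0 as n → ∞. -/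
set_option linter.unusedSectionVars false

open Finset in
lemma cs_sqrt {ι : Type*} (s : Finset ι) (f g : ι → ℝ) :
    ∑ i ∈ s, f i * g i ≤ Real.sqrt (∑ i ∈ s, f i ^ 2) * Real.sqrt (∑ i ∈ s, g i ^ 2) := by
  calc ∑ i ∈ s, f i * g i ≤ |∑ i ∈ s, f i * g i| := le_abs_self _
  _ = Real.sqrt ((∑ i ∈ s, f i * g i) ^ 2) := (Real.sqrt_sq_eq_abs _).symm
  _ ≤ Real.sqrt ((∑ i ∈ s, f i ^ 2) * ∑ i ∈ s, g i ^ 2) :=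
      Real.sqrt_le_sqrt (Finset.sum_mul_sq_le_sq_mul_sq s f g)
  _ = _ := Real.sqrt_mul (Finset.sum_nonneg fun i _ => sq_nonneg _) _

lemma mink_sqrt {ι : Type*} (s : Finset ι) (f g : ι → ℝ) :
    Real.sqrt (∑ i ∈ s, (f i + g i) ^ 2) ≤
      Real.sqrt (∑ i ∈ s, f i ^ 2) + Real.sqrt (∑ i ∈ s, g i ^ 2) := by
  set F := Real.sqrt (∑ i ∈ s, f i ^ 2) with hF
  set G := Real.sqrt (∑ i ∈ s, g i ^ 2) with hG
  have hFn : 0 ≤ F := Real.sqrt_nonneg _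
  have hGn : 0 ≤ G := Real.sqrt_nonneg _
  have hF2 : F ^ 2 = ∑ i ∈ s, f i ^ 2 :=
    Real.sq_sqrt (Finset.sum_nonneg fun i _ => sq_nonneg _)
  have hG2 : G ^ 2 = ∑ i ∈ s, g i ^ 2 :=
    Real.sq_sqrt (Finset.sum_nonneg fun i _ => sq_nonneg _)
  have key : ∑ i ∈ s, (f i + g i) ^ 2 ≤ (F + G) ^ 2 := by
    have expand : ∑ i ∈ s, (f i + g i) ^ 2 =
        (∑ i ∈ s, f i ^ 2) + 2 * (∑ i ∈ s, f i * g i) + ∑ i ∈ s, g i ^ 2 := by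
      rw [Finset.mul_sum, ← Finset.sum_add_distrib, ← Finset.sum_add_distrib]
      exact Finset.sum_congr rfl fun i _ => by ring
    rw [expand]
    have := cs_sqrt s f g
    nlinarith
  calc Real.sqrt (∑ i ∈ s, (f i + g i) ^ 2) ≤ Real.sqrt ((F + G) ^ 2) :=
        Real.sqrt_le_sqrt key
  _ = F + G := Real.sqrt_sq (by positivity)

open Finset Filter

section helpers
variable {ι : Type*} [AddCommGroup ι] [DecidableEq ι]
variable (bb : ι → ℝ) (s : Finset ι)

lemma sq_sum_le (hs : ∀ i ∉ s, bb i = 0) (t : Finset ι) :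
    ∑ i ∈ t, bb i ^ 2 ≤ ∑ i ∈ s, bb i ^ 2 := by
  calc ∑ i ∈ t, bb i ^ 2 ≤ ∑ i ∈ t ∪ s, bb i ^ 2 :=
        Finset.sum_le_sum_of_subset_of_nonneg Finset.subset_union_left
          (fun i _ _ => sq_nonneg _)
  _ = ∑ i ∈ s, bb i ^ 2 := by
      refine (Finset.sum_subset Finset.subset_union_right ?_).symm
      intro i _ hi
      rw [hs i hi]; ring

lemma shift_sq_sum_le (hs : ∀ i ∉ s, bb i = 0) (j : ι) :
    ∑ i ∈ s, (bb (i + j)) ^ 2 ≤ ∑ i ∈ s, bb i ^ 2 := by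
  have himg : ∑ i ∈ s.image (· + j), bb i ^ 2 = ∑ i ∈ s, bb (i + j) ^ 2 :=
    Finset.sum_image (fun x _ y _ h => by simpa using h)
  rw [← himg]
  exact sq_sum_le bb s hs _

lemma diff_support (hs : ∀ i ∉ s, bb i = 0) (j : ι) :
    ∀ i ∉ (s.image (· - j) ∪ s), (bb (i + j) - bb i) ^ 2 = 0 := by
  intro i hi
  rw [Finset.mem_union, not_or] at hi
  have h1 : bb (i + j) = 0 := by
    apply hs
    intro hmem
    exact hi.1 (Finset.mem_image.2 ⟨i + j, hmem, by abel⟩)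
  rw [h1, hs i hi.2]; ring

lemma delta_summable (hs : ∀ i ∉ s, bb i = 0) (j : ι) :
    Summable (fun i => (bb (i + j) - bb i) ^ 2) :=
  summable_of_ne_finset_zero (fun i hi => diff_support bb s hs j i hi)

lemma tsum_shift (f : ι → ℝ) (k : ι) : ∑' i, f (i + k) = ∑' i, f i :=
  (Equiv.addRight k).tsum_eq f

lemma delta_neg (v : ι) :
    (∑' i, (bb (i + -v) - bb i) ^ 2) = ∑' i, (bb (i + v) - bb i) ^ 2 := by
  have := tsum_shift (fun i => (bb (i + -v) - bb i) ^ 2) v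
  rw [← this]
  congr 1
  funext i
  have h1 : i + v + -v = i := by abel
  rw [h1]
  ring

lemma delta_tri (hs : ∀ i ∉ s, bb i = 0) (j j' v : ι) (h : j = j' + v) :
    Real.sqrt (∑' i, (bb (i + j) - bb i) ^ 2) ≤
      Real.sqrt (∑' i, (bb (i + j') - bb i) ^ 2) +
        Real.sqrt (∑' i, (bb (i + v) - bb i) ^ 2) := by
  set f : ι → ℝ := fun i => bb (i + v + j') - bb (i + v) with hf
  set g : ι → ℝ := fun i => bb (i + v) - bb i with hg
  have hfg : ∀ i, bb (i + j) - bb i = f i + g i := by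
    intro i
    have : i + j = i + v + j' := by rw [h]; abel
    rw [this, hf, hg]; ring
  set T : Finset ι := (s.image (· - j) ∪ s.image (· - v)) ∪ s with hT
  have hTf : ∀ i ∉ T, f i = 0 := by
    intro i hi
    rw [hT, Finset.mem_union, Finset.mem_union, not_or, not_or] at hi
    have h1 : bb (i + v + j') = 0 := by
      apply hs; intro hmem
      refine hi.1.1 (Finset.mem_image.2 ⟨i + v + j', hmem, ?_⟩)
      rw [h]; abel
    have h2 : bb (i + v) = 0 := by
      apply hs; intro hmem
      exact hi.1.2 (Finset.mem_image.2 ⟨i + v, hmem, by abel⟩)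
    rw [hf]; simp [h1, h2]
  have hTg : ∀ i ∉ T, g i = 0 := by
    intro i hi
    rw [hT, Finset.mem_union, Finset.mem_union, not_or, not_or] at hi
    have h2 : bb (i + v) = 0 := by
      apply hs; intro hmem
      exact hi.1.2 (Finset.mem_image.2 ⟨i + v, hmem, by abel⟩)
    show bb (i + v) - bb i = 0
    rw [h2, hs i hi.2]; ring
  have e1 : (∑' i, (bb (i + j) - bb i) ^ 2) = ∑ i ∈ T, (f i + g i) ^ 2 := by
    rw [show (fun i => (bb (i + j) - bb i) ^ 2) = fun i => (f i + g i) ^ 2 from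
      funext fun i => by rw [hfg i]]
    exact tsum_eq_sum (fun i hi => by rw [hTf i hi, hTg i hi]; ring)
  have e2 : (∑' i, (bb (i + j') - bb i) ^ 2) = ∑ i ∈ T, f i ^ 2 := by
    have := tsum_shift (fun i => (bb (i + j') - bb i) ^ 2) v
    rw [← this]
    exact tsum_eq_sum (fun i hi => by rw [show bb (i + v + j') - bb (i + v) = f i from rfl] at *; rw [hTf i hi]; ring)
  have e3 : (∑' i, (bb (i + v) - bb i) ^ 2) = ∑ i ∈ T, g i ^ 2 :=
    tsum_eq_sum (fun i hi => by
      have := hTg i hi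
      simp only [hg] at this
      rw [this]; ring)
  rw [e1, e2, e3]
  exact mink_sqrt T f g
end helpers
set_option maxHeartbeats 1000000

open MeasureTheory Filter

/-- Variance identity for weighted sums of a stationary random field with absolutely
summable covariances: `E[S_n²]/‖b_n‖² = σ² + ε_n`, with
`|ε_n| ≤ ∑_j |E[X_0 X_j]| |∑_i b_{n,i} b_{n,i+j}/‖b_n‖² − 1|` and `ε_n → 0`. -/
theorem variance_identity_weighted_sums
    {Ω : Type*} [mΩ : MeasurableSpace Ω] (μ : Measure Ω) [IsProbabilityMeasure μ]
    (d : ℕ) (hd : 1 ≤ d)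
    (X : (Fin d → ℤ) → Ω → ℝ) (hmeas : ∀ i, Measurable (X i))
    (hX2 : ∀ i, MemLp (X i) 2 μ)
    (hcent : ∫ ω, X 0 ω ∂μ = 0)
    (hstat : ∀ i j : Fin d → ℤ, ∫ ω, X i ω * X (i + j) ω ∂μ = ∫ ω, X 0 ω * X j ω ∂μ)
    (hcov : Summable (fun j : Fin d → ℤ => |∫ ω, X 0 ω * X j ω ∂μ|))
    (B : ℕ → Finset (Fin d → ℤ)) (hBne : ∀ n, (B n).Nonempty)
    (b : ℕ → (Fin d → ℤ) → ℝ) (hsupp : ∀ n i, i ∉ B n → b n i = 0)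
    (hNpos : ∀ n, 0 < ∑ i ∈ B n, (b n i) ^ 2)
    (hnorm : Tendsto (fun n => ∑ i ∈ B n, (b n i) ^ 2) atTop atTop)
    (hshift : ∀ q : Fin d, Tendsto (fun n =>
        (∑' i : Fin d → ℤ, (b n (i + fun r => if r = q then 1 else 0) - b n i) ^ 2)
            ^ ((1 : ℝ) / 2) / (∑ i ∈ B n, (b n i) ^ 2) ^ ((1 : ℝ) / 2))
      atTop (nhds 0))
    (σ2 : ℝ) (hσ2 : σ2 = ∑' j : Fin d → ℤ, ∫ ω, X 0 ω * X j ω ∂μ)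
    (e : ℕ → ℝ)
    (he : ∀ n, e n =
      (∫ ω, (∑ i ∈ B n, b n i * X i ω) ^ 2 ∂μ) / (∑ i ∈ B n, (b n i) ^ 2) - σ2) :
    (∀ n, |e n| ≤ ∑' j : Fin d → ℤ, |∫ ω, X 0 ω * X j ω ∂μ| *
        |(∑ i ∈ B n, b n i * b n (i + j)) / (∑ i ∈ B n, (b n i) ^ 2) - 1|)
    ∧ Tendsto e atTop (nhds 0) := by
  classical
  set c : (Fin d → ℤ) → ℝ := fun j => ∫ ω, X 0 ω * X j ω ∂μ with hc
  set N : ℕ → ℝ := fun n => ∑ i ∈ B n, (b n i) ^ 2 with hN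
  set A : ℕ → (Fin d → ℤ) → ℝ := fun n j => ∑ i ∈ B n, b n i * b n (i + j) with hA
  -- integrability of products
  have hmul : ∀ i k : Fin d → ℤ, Integrable (fun ω => X i ω * X k ω) μ := by
    intro i k
    have h1 : MemLp (fun ω => X i ω + X k ω) 2 μ := (hX2 i).add (hX2 k)
    have h2 : Integrable
        (fun ω => ((X i ω + X k ω) ^ 2 - (X i ω) ^ 2 - (X k ω) ^ 2) / 2) μ :=
      ((h1.integrable_sq.sub (hX2 i).integrable_sq).sub (hX2 k).integrable_sq).div_const 2
    exact h2.congr (Filter.Eventually.of_forall fun ω => by ring)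
  -- covariance of shifted terms
  have hcovshift : ∀ i k : Fin d → ℤ, ∫ ω, X i ω * X k ω ∂μ = c (k - i) := by
    intro i k
    have := hstat i (k - i)
    rw [show i + (k - i) = k by abel] at this
    exact this
  -- expansion of the second moment
  have hE : ∀ n, ∫ ω, (∑ i ∈ B n, b n i * X i ω) ^ 2 ∂μ =
      ∑ i ∈ B n, ∑ k ∈ B n, b n i * b n k * c (k - i) := by
    intro n
    have hexp : ∀ ω, (∑ i ∈ B n, b n i * X i ω) ^ 2 =
        ∑ i ∈ B n, ∑ k ∈ B n, b n i * b n k * (X i ω * X k ω) := by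
      intro ω
      rw [sq, Finset.sum_mul_sum]
      exact Finset.sum_congr rfl fun i _ => Finset.sum_congr rfl fun k _ => by ring
    calc ∫ ω, (∑ i ∈ B n, b n i * X i ω) ^ 2 ∂μ
        = ∫ ω, ∑ i ∈ B n, ∑ k ∈ B n, b n i * b n k * (X i ω * X k ω) ∂μ := by
          congr 1; funext ω; exact hexp ω
      _ = ∑ i ∈ B n, ∑ k ∈ B n, b n i * b n k * ∫ ω, X i ω * X k ω ∂μ := by
          rw [integral_finset_sum _ (fun i _ =>
            integrable_finset_sum _ (fun k _ => (hmul i k).const_mul _))]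
          exact Finset.sum_congr rfl fun i _ => by
            rw [integral_finset_sum _ (fun k _ => (hmul i k).const_mul _)]
            exact Finset.sum_congr rfl fun k _ => integral_const_mul _ _
      _ = ∑ i ∈ B n, ∑ k ∈ B n, b n i * b n k * c (k - i) := by
          exact Finset.sum_congr rfl fun i _ => Finset.sum_congr rfl fun k _ => by
            rw [hcovshift i k]

  open Pointwise in
  have hfull : True := trivial
  -- support of A
  have hAsupp : ∀ n, ∀ j ∉ (B n - B n : Finset (Fin d → ℤ)), A n j = 0 := by
    intro n j hj
    apply Finset.sum_eq_zero
    intro i hi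
    by_cases h : b n (i + j) = 0
    · rw [h]; ring
    · exfalso
      have hij : i + j ∈ B n := by
        by_contra hmem
        exact h (hsupp n _ hmem)
      exact hj (Finset.mem_sub.2 ⟨i + j, hij, i, hi, by abel⟩)
  -- regrouping
  have hregroup : ∀ n, ∑ i ∈ B n, ∑ k ∈ B n, b n i * b n k * c (k - i) =
      ∑ j ∈ (B n - B n : Finset (Fin d → ℤ)), c j * A n j := by
    intro n
    have step1 : ∑ j ∈ (B n - B n : Finset (Fin d → ℤ)), c j * A n j =
        ∑ j ∈ (B n - B n : Finset (Fin d → ℤ)), ∑ i ∈ B n, b n i * b n (i + j) * c j := by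
      refine Finset.sum_congr rfl fun j _ => ?_
      simp only [hA]
      rw [Finset.mul_sum]
      exact Finset.sum_congr rfl fun i _ => by ring
    have step2 : ∀ i ∈ B n, ∑ k ∈ B n, b n i * b n k * c (k - i) =
        ∑ j ∈ (B n - B n : Finset (Fin d → ℤ)), b n i * b n (i + j) * c j := by
      intro i hi
      have himgsub : (B n).image (· - i) ⊆ (B n - B n : Finset (Fin d → ℤ)) := by
        intro j hj
        obtain ⟨k, hk, rfl⟩ := Finset.mem_image.1 hj
        exact Finset.mem_sub.2 ⟨k, hk, i, hi, rfl⟩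
      have h1 : ∑ j ∈ (B n).image (· - i), b n i * b n (i + j) * c j =
          ∑ j ∈ (B n - B n : Finset (Fin d → ℤ)), b n i * b n (i + j) * c j := by
        refine Finset.sum_subset himgsub fun j hj hjni => ?_
        have : b n (i + j) = 0 := by
          apply hsupp
          intro hmem
          exact hjni (Finset.mem_image.2 ⟨i + j, hmem, by abel⟩)
        rw [this]; ring
      rw [← h1, Finset.sum_image (fun x _ y _ h => by simpa using h)]
      refine Finset.sum_congr rfl fun k hk => ?_
      rw [show i + (k - i) = k by abel]
    calc ∑ i ∈ B n, ∑ k ∈ B n, b n i * b n k * c (k - i)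
        = ∑ i ∈ B n, ∑ j ∈ (B n - B n : Finset (Fin d → ℤ)), b n i * b n (i + j) * c j :=
          Finset.sum_congr rfl step2
    _ = ∑ j ∈ (B n - B n : Finset (Fin d → ℤ)), ∑ i ∈ B n, b n i * b n (i + j) * c j :=
          Finset.sum_comm
    _ = ∑ j ∈ (B n - B n : Finset (Fin d → ℤ)), c j * A n j := step1.symm
  have hE2 : ∀ n, ∫ ω, (∑ i ∈ B n, b n i * X i ω) ^ 2 ∂μ = ∑' j, c j * A n j := by
    intro n
    rw [hE n, hregroup n]
    exact (tsum_eq_sum (fun j hj => by rw [hAsupp n j hj]; ring)).symm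
  -- bound |A n j| ≤ N n
  have hNnonneg : ∀ n, (0:ℝ) ≤ N n := fun n => (hNpos n).le
  have hAbound : ∀ n j, |A n j| ≤ N n := by
    intro n j
    have hsq : (A n j) ^ 2 ≤ N n * N n := by
      calc (A n j) ^ 2 ≤ (∑ i ∈ B n, (b n i) ^ 2) * ∑ i ∈ B n, (b n (i + j)) ^ 2 :=
            Finset.sum_mul_sq_le_sq_mul_sq _ _ _
      _ ≤ N n * N n := by
          refine mul_le_mul_of_nonneg_left ?_ (hNnonneg n)
          exact shift_sq_sum_le (b n) (B n) (hsupp n) j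
    calc |A n j| = Real.sqrt ((A n j) ^ 2) := (Real.sqrt_sq_eq_abs _).symm
    _ ≤ Real.sqrt (N n * N n) := Real.sqrt_le_sqrt hsq
    _ = N n := Real.sqrt_mul_self (hNnonneg n)
  have hANle2 : ∀ n j, |A n j / N n - 1| ≤ 2 := by
    intro n j
    have h1 : |A n j / N n| ≤ 1 := by
      rw [abs_div, abs_of_pos (hNpos n)]
      rw [div_le_one (hNpos n)]
      exact hAbound n j
    calc |A n j / N n - 1| ≤ |A n j / N n| + 1 := by
          have := abs_sub (A n j / N n) 1
          calc |A n j / N n - 1| ≤ |A n j / N n| + |(1:ℝ)| := abs_sub _ _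
          _ = |A n j / N n| + 1 := by rw [abs_one]
    _ ≤ 2 := by linarith
  -- summability facts
  have hcsummable : Summable c := summable_abs_iff.mp hcov
  have hterm_summable : ∀ n, Summable (fun j => c j * A n j / N n) := by
    intro n
    apply summable_of_ne_finset_zero (s := (B n - B n : Finset (Fin d → ℤ)))
    intro j hj
    rw [hAsupp n j hj]
    simp
  -- e n as a tsum
  have ecn : ∀ n, e n = ∑' j, c j * (A n j / N n - 1) := by
    intro n
    rw [he n, hE2 n, hσ2]
    rw [← tsum_div_const]
    rw [← Summable.tsum_sub (hterm_summable n) hcsummable]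
    exact tsum_congr fun j => by ring
  have hsummable_abs : ∀ n, Summable (fun j => |c j| * |A n j / N n - 1|) := by
    intro n
    apply Summable.of_nonneg_of_le (fun j => by positivity)
      (fun j => mul_le_mul_of_nonneg_left (hANle2 n j) (abs_nonneg _))
    exact hcov.mul_right 2
  -- Part (a)
  have parta : ∀ n, |e n| ≤ ∑' j, |c j| * |A n j / N n - 1| := by
    intro n
    rw [ecn n]
    have := norm_tsum_le_tsum_norm (f := fun j => c j * (A n j / N n - 1)) ?_
    · calc |∑' j, c j * (A n j / N n - 1)| = ‖∑' j, c j * (A n j / N n - 1)‖ := by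
            rw [Real.norm_eq_abs]
      _ ≤ ∑' j, ‖c j * (A n j / N n - 1)‖ := this
      _ = ∑' j, |c j| * |A n j / N n - 1| := tsum_congr fun j => by
            rw [Real.norm_eq_abs, abs_mul]
    · refine (hsummable_abs n).congr fun j => ?_
      rw [Real.norm_eq_abs, abs_mul]
  refine ⟨parta, ?_⟩
  -- Part (b): convergence
  set δ : ℕ → (Fin d → ℤ) → ℝ := fun n j => ∑' i, (b n (i + j) - b n i) ^ 2 with hδ
  have hδnonneg : ∀ n j, 0 ≤ δ n j := fun n j => tsum_nonneg fun i => sq_nonneg _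
  have hsqrtNpos : ∀ n, 0 < Real.sqrt (N n) := fun n => Real.sqrt_pos.2 (hNpos n)
  have hshift' : ∀ q : Fin d, Tendsto
      (fun n => Real.sqrt (δ n (fun r => if r = q then 1 else 0)) / Real.sqrt (N n))
      atTop (nhds 0) := by
    intro q
    have := hshift q
    refine this.congr fun n => ?_
    rw [← Real.sqrt_eq_rpow, ← Real.sqrt_eq_rpow]
  -- main claim by induction on ℓ¹ norm of j
  have claim : ∀ j : Fin d → ℤ,
      Tendsto (fun n => Real.sqrt (δ n j) / Real.sqrt (N n)) atTop (nhds 0) := by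
    have main : ∀ m : ℕ, ∀ j : Fin d → ℤ, (∑ q, (j q).natAbs) = m →
        Tendsto (fun n => Real.sqrt (δ n j) / Real.sqrt (N n)) atTop (nhds 0) := by
      intro m
      induction m with
      | zero =>
        intro j hj
        have hj0 : j = 0 := by
          funext q
          have := (Finset.sum_eq_zero_iff.1 hj) q (Finset.mem_univ q)
          simpa [Int.natAbs_eq_zero] using this
        subst hj0
        have hzero : ∀ n, δ n 0 = 0 := by
          intro n
          rw [hδ]
          simp
        simpa [hzero] using (tendsto_const_nhds :
          Tendsto (fun _ : ℕ => (0:ℝ)) atTop (nhds 0))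
      | succ m ih =>
        intro j hj
        have hex : ∃ q, j q ≠ 0 := by
          by_contra h
          push_neg at h
          simp [h] at hj
        obtain ⟨q, hq⟩ := hex
        set s : ℤ := if 0 < j q then 1 else -1 with hs
        set v : Fin d → ℤ := fun r => if r = q then s else 0 with hv
        set j' : Fin d → ℤ := j - v with hj'
        have hjq' : j' q = j q - s := by simp [hj', hv]
        have hrest : ∀ r, r ≠ q → j' r = j r := by
          intro r hr
          simp [hj', hv, hr]
        have hnat : (j' q).natAbs + 1 = (j q).natAbs := by
          rcases lt_or_ge 0 (j q) with h0 | h0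
          · have : s = 1 := if_pos h0
            omega
          · have h0' : j q < 0 := lt_of_le_of_ne h0 hq
            have : s = -1 := if_neg (not_lt.2 h0)
            omega
        have hsum' : (∑ r, (j' r).natAbs) = m := by
          have e1 : (∑ r, (j' r).natAbs) =
              (j' q).natAbs + ∑ r ∈ Finset.univ.erase q, (j' r).natAbs :=
            (Finset.add_sum_erase _ _ (Finset.mem_univ q)).symm
          have e2 : (∑ r, (j r).natAbs) =
              (j q).natAbs + ∑ r ∈ Finset.univ.erase q, (j r).natAbs :=
            (Finset.add_sum_erase _ _ (Finset.mem_univ q)).symm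
          have e3 : ∑ r ∈ Finset.univ.erase q, (j' r).natAbs =
              ∑ r ∈ Finset.univ.erase q, (j r).natAbs :=
            Finset.sum_congr rfl fun r hr => by
              rw [hrest r (Finset.ne_of_mem_erase hr)]
          rw [e2, ← e3] at hj
          omega
        have hjj' : j = j' + v := by
          rw [hj']
          abel
        have tri : ∀ n, Real.sqrt (δ n j) ≤ Real.sqrt (δ n j') + Real.sqrt (δ n v) :=
          fun n => delta_tri (b n) (B n) (hsupp n) j j' v hjj'
        have hδv : ∀ n, δ n v = δ n (fun r => if r = q then 1 else 0) := by
          intro n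
          rcases lt_or_ge 0 (j q) with h0 | h0
          · have hs1 : s = 1 := if_pos h0
            have : v = (fun r => if r = q then 1 else 0) := by
              funext r
              rw [hv]
              simp [hs1]
            rw [this]
          · have hs1 : s = -1 := if_neg (not_lt.2 h0)
            have hveq : v = -(fun r => if r = q then (1:ℤ) else 0) := by
              funext r
              simp [hv, hs1]
              split_ifs <;> simp
            rw [hδ]
            simp only
            rw [hveq]
            exact delta_neg (b n) _
        have hbound : ∀ n, Real.sqrt (δ n j) / Real.sqrt (N n) ≤
            Real.sqrt (δ n j') / Real.sqrt (N n) +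
              Real.sqrt (δ n (fun r => if r = q then 1 else 0)) / Real.sqrt (N n) := by
          intro n
          rw [← hδv n, ← add_div]
          gcongr
          exact tri n
        have hlim : Tendsto (fun n => Real.sqrt (δ n j') / Real.sqrt (N n) +
            Real.sqrt (δ n (fun r => if r = q then 1 else 0)) / Real.sqrt (N n))
            atTop (nhds 0) := by
          have := (ih j' hsum').add (hshift' q)
          simpa using this
        exact squeeze_zero (fun n => by positivity) hbound hlim
    intro j
    exact main _ j rfl
  -- A n j / N n → 1 in the form |A n j / N n - 1| → 0
  have hAN : ∀ j, Tendsto (fun n => |A n j / N n - 1|) atTop (nhds 0) := by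
    intro j
    have hb : ∀ n, |A n j / N n - 1| ≤ Real.sqrt (δ n j) / Real.sqrt (N n) := by
      intro n
      have hANsub : A n j - N n = ∑ i ∈ B n, b n i * (b n (i + j) - b n i) := by
        rw [hA, hN, ← Finset.sum_sub_distrib]
        exact Finset.sum_congr rfl fun i _ => by ring
      have hcs : (A n j - N n) ^ 2 ≤ N n * δ n j := by
        rw [hANsub]
        calc (∑ i ∈ B n, b n i * (b n (i + j) - b n i)) ^ 2
            ≤ (∑ i ∈ B n, (b n i) ^ 2) * ∑ i ∈ B n, (b n (i + j) - b n i) ^ 2 :=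
              Finset.sum_mul_sq_le_sq_mul_sq _ _ _
        _ ≤ N n * δ n j := by
            refine mul_le_mul_of_nonneg_left ?_ (hNnonneg n)
            exact Summable.sum_le_tsum (B n) (fun i _ => sq_nonneg _)
              (delta_summable (b n) (B n) (hsupp n) j)
      have habs : |A n j - N n| ≤ Real.sqrt (N n) * Real.sqrt (δ n j) := by
        calc |A n j - N n| = Real.sqrt ((A n j - N n) ^ 2) := (Real.sqrt_sq_eq_abs _).symm
        _ ≤ Real.sqrt (N n * δ n j) := Real.sqrt_le_sqrt hcs
        _ = Real.sqrt (N n) * Real.sqrt (δ n j) := Real.sqrt_mul (hNnonneg n) _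
      have hNne : N n ≠ 0 := (hNpos n).ne'
      have heq : |A n j / N n - 1| = |A n j - N n| / N n := by
        rw [show A n j / N n - 1 = (A n j - N n) / N n from by field_simp,
          abs_div, abs_of_pos (hNpos n)]
      rw [heq]
      rw [div_le_iff₀ (hNpos n)]
      calc |A n j - N n| ≤ Real.sqrt (N n) * Real.sqrt (δ n j) := habs
      _ = Real.sqrt (δ n j) / Real.sqrt (N n) * N n := by
          have hNs : Real.sqrt (N n) * Real.sqrt (N n) = N n := Real.mul_self_sqrt (hNnonneg n)
          rw [div_mul_eq_mul_div, eq_div_iff (hsqrtNpos n).ne']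
          linear_combination Real.sqrt (δ n j) * hNs
    exact squeeze_zero (fun n => abs_nonneg _) hb (claim j)
  -- dominated convergence
  have hG : Tendsto (fun n => ∑' j, |c j| * |A n j / N n - 1|) atTop (nhds 0) := by
    have hdom := tendsto_tsum_of_dominated_convergence
      (𝓕 := atTop) (f := fun n (j : Fin d → ℤ) => |c j| * |A n j / N n - 1|)
      (g := fun _ => (0:ℝ)) (bound := fun j => |c j| * 2)
      (hcov.mul_right 2)
      (fun j => by simpa using (hAN j).const_mul |c j|)
      (Filter.Eventually.of_forall fun n => fun j => by
        rw [Real.norm_eq_abs, abs_of_nonneg (by positivity)]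
        exact mul_le_mul_of_nonneg_left (hANle2 n j) (abs_nonneg _))
    simpa using hdom
  exact squeeze_zero_norm (fun n => (Real.norm_eq_abs (e n)) ▸ parta n) hG
end
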